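/- Let ∇ be a pseudoconnection on ξ with principal homomorphism P, and let E^∇ = d^∇∘∇ and L^∇ = P∘∇ − ∇∘P. Then E^∇(f·s) = df ∧ L^∇(s) + f·E^∇(s) for all f ∈ Ω⁰(M) and s ∈ Ω⁰(ξ). -/
import Mathlib


/-!
Algebraic model of smooth forms with values in a vector bundle, following the paper's setup:
`R` plays the role of the ring `Ω⁰(M)` of smooth functions, `Ω k` of the `R`-module `Ω^k(M)`
of smooth `k`-forms, `S` of the `R`-module `Ω⁰(ξ)` of smooth sections of a vector bundle `ξ`,
and `Ω k ⊗[R] S` of `Ω^k(ξ) = Ω^k(M) ⊗_{Ω⁰(M)} Ω⁰(ξ)`.  A bundle homomorphism over the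
identity corresponds to an `R`-linear map `S →ₗ[R] S`; its induced action on `Ω^k(ξ)` is
`LinearMap.lTensor`.  `d0 : R →ₗ[ℝ] Ω 1` and `d k : Ω k →ₗ[ℝ] Ω (k+1)` model the exterior
derivative and `wedge` the wedge product of scalar forms.
-/

open TensorProduct

section PseudoConnections

variable {R : Type} [CommRing R] [Algebra ℝ R]
variable {Ω : ℕ → Type} [∀ k, AddCommGroup (Ω k)] [∀ k, Module R (Ω k)]
  [∀ k, Module ℝ (Ω k)] [∀ k, IsScalarTower ℝ R (Ω k)]
variable {S : Type} [AddCommGroup S] [Module R S] [Module ℝ S] [IsScalarTower ℝ R S]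

/-- The alternating product `β ∧_α ·  : Ω^l(ξ) → Ω^{k+l}(ξ)` induced by a bundle
homomorphism `α`, determined on generators by `β ∧_α (ω ⊗ s) = (β ∧ ω) ⊗ α s`.
Taking `α = LinearMap.id` gives the ordinary alternating product `∧`. -/
noncomputable def wedgeB (wedge : ∀ k l : ℕ, Ω k →ₗ[R] Ω l →ₗ[R] Ω (k + l))
    (k l : ℕ) (α : S →ₗ[R] S) (β : Ω k) : Ω l ⊗[R] S →ₗ[R] Ω (k + l) ⊗[R] S :=
  LinearMap.rTensor S (wedge k l β) ∘ₗ LinearMap.lTensor (Ω l) α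

/-- Cast between scalar form degrees. -/
noncomputable def mcast {a b : ℕ} (h : a = b) : Ω a ≃ₗ[ℝ] Ω b := by
  subst h; exact LinearEquiv.refl ℝ _

/-- Cast between bundle-valued form degrees. -/
noncomputable def ocast {a b : ℕ} (h : a = b) : Ω a ⊗[R] S ≃ₗ[ℝ] Ω b ⊗[R] S := by
  subst h; exact LinearEquiv.refl ℝ _

/-- `E^∇ = d^∇ ∘ ∇`. -/
noncomputable def Emap (nabla : S →ₗ[ℝ] Ω 1 ⊗[R] S)
    (D : ∀ k, Ω k ⊗[R] S →ₗ[ℝ] Ω (k+1) ⊗[R] S) : S → Ω 2 ⊗[R] S :=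
  fun s => D 1 (nabla s)

/-- `L^∇ = P ∘ ∇ − ∇ ∘ P`. -/
noncomputable def Lmap (P : S →ₗ[R] S) (nabla : S →ₗ[ℝ] Ω 1 ⊗[R] S) : S → Ω 1 ⊗[R] S :=
  fun s => LinearMap.lTensor (Ω 1) P (nabla s) - nabla (P s)

/-- The curvature form `F^∇ = P ∘ d^∇ ∘ ∇ − d^∇ ∘ P ∘ ∇ + d^∇ ∘ ∇ ∘ P`. -/
noncomputable def Fmap (P : S →ₗ[R] S) (nabla : S →ₗ[ℝ] Ω 1 ⊗[R] S)
    (D : ∀ k, Ω k ⊗[R] S →ₗ[ℝ] Ω (k+1) ⊗[R] S) : S → Ω 2 ⊗[R] S :=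
  fun s => LinearMap.lTensor (Ω 2) P (D 1 (nabla s)) - D 1 (LinearMap.lTensor (Ω 1) P (nabla s))
    + D 1 (nabla (P s))

/-- `G^∇ = d^∇ ∘ d^∇ ∘ ∇`. -/
noncomputable def Gmap (nabla : S →ₗ[ℝ] Ω 1 ⊗[R] S)
    (D : ∀ k, Ω k ⊗[R] S →ₗ[ℝ] Ω (k+1) ⊗[R] S) : S → Ω 3 ⊗[R] S :=
  fun s => D 2 (D 1 (nabla s))

/-- If `∇` is a pseudoconnection on `ξ` with principal homomorphism `P`,
`E^∇ = d^∇∘∇` and `L^∇ = P∘∇ − ∇∘P`, then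
`E^∇(f·s) = df ∧ L^∇(s) + f·E^∇(s)` for all `f ∈ Ω⁰(M)`, `s ∈ Ω⁰(ξ)`. -/
theorem E_Leibniz
    (d0 : R →ₗ[ℝ] Ω 1) (d : ∀ k, Ω k →ₗ[ℝ] Ω (k+1))
    (wedge : ∀ k l : ℕ, Ω k →ₗ[R] Ω l →ₗ[R] Ω (k + l))
    -- exterior-derivative axioms of the smooth context
    (hd_smul : ∀ (k : ℕ) (f : R) (ω : Ω k),
      d k (f • ω) = mcast (show 1 + k = k + 1 by omega) (wedge 1 k (d0 f) ω) + f • d k ω)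
    (hdd0 : ∀ f : R, d 1 (d0 f) = 0)
    -- the pseudoconnection with principal homomorphism `P`
    (P : S →ₗ[R] S) (nabla : S →ₗ[ℝ] Ω 1 ⊗[R] S)
    (hLeib : ∀ (f : R) (s : S), nabla (f • s) = d0 f ⊗ₜ[R] P s + f • nabla s)
    -- its exterior derivative, determined on generators
    (D : ∀ k, Ω k ⊗[R] S →ₗ[ℝ] Ω (k+1) ⊗[R] S)
    (hD : ∀ (k : ℕ) (ω : Ω k) (s : S),
      D k (ω ⊗ₜ[R] s) = d k ω ⊗ₜ[R] P s
        + ((-1:ℤ)^k) • wedgeB wedge k 1 LinearMap.id ω (nabla s)) :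
    ∀ (f : R) (s : S),
      Emap nabla D (f • s)
        = wedgeB wedge 1 1 LinearMap.id (d0 f) (Lmap P nabla s) + f • Emap nabla D s := by
  intro f s
  have hmcast : ∀ (h : 1 + 1 = 2) (x : Ω 2), mcast (Ω := Ω) h x = x := by
    intro h x; rfl
  -- key lemma: D 1 (f • x) = wedgeB (d0 f) with α = P, plus f • D 1 x
  have key : ∀ x : Ω 1 ⊗[R] S,
      D 1 (f • x) = wedgeB wedge 1 1 P (d0 f) x + f • D 1 x := by
    intro x
    induction x using TensorProduct.induction_on with
    | zero => simp
    | tmul ω s' =>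
        rw [smul_tmul', hD 1 (f • ω) s', hD 1 ω s', hd_smul 1 f ω]
        simp only [wedgeB, LinearMap.coe_comp, Function.comp_apply,
          LinearMap.lTensor_tmul, LinearMap.id_coe, id_eq, hmcast,
          TensorProduct.add_tmul, TensorProduct.smul_tmul', map_smul,
          LinearMap.rTensor_smul, LinearMap.smul_apply, LinearMap.rTensor_tmul,
          smul_add]
        rw [smul_comm ((-1:ℤ)^1) f]
        abel
    | add x y hx hy =>
        rw [smul_add, map_add, hx, hy, map_add, map_add, smul_add]
        abel
  have hwP : ∀ x : Ω 1 ⊗[R] S,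
      wedgeB wedge 1 1 LinearMap.id (d0 f) (LinearMap.lTensor (Ω 1) P x)
        = wedgeB wedge 1 1 P (d0 f) x := by
    intro x
    simp only [wedgeB, LinearMap.lTensor_id, LinearMap.comp_id,
      LinearMap.coe_comp, Function.comp_apply]
  simp only [Emap, Lmap, map_sub]
  rw [hLeib f s, map_add, key, hD 1 (d0 f) (P s), hdd0 f, hwP]
  simp only [TensorProduct.zero_tmul, zero_add, pow_one, neg_smul, one_smul]
  abel
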